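/- arXiv:1805.04897 — 5 statements merged into one kernel-verified Lean document; each statement's English description precedes it below -/
import Mathlib

section
/- The Smith dynamic satisfies positive correlation: for the mean dynamic v built from ρ_{ss'}(π) = [π_{s'} − π_s]_+, one has π · v(π,x) ≥ 0 for all π ∈ ℝ^S and x ∈ Δ^S, with strict inequality whenever v(π,x) ≠ 0. -/
open Finset

/-- The mean dynamic of the Smith protocol. -/
noncomputable def smithV {S : Type*} [Fintype S] (π x : S → ℝ) (s : S) : ℝ :=
  (∑ s', x s' * max (π s - π s') 0) - x s * ∑ s', max (π s' - π s) 0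

private lemma max_mul_self (a : ℝ) : max a 0 * a = (max a 0)^2 := by
  rcases le_or_gt a 0 with h | h
  · rw [max_eq_right h]; ring
  · rw [max_eq_left h.le]; ring

private lemma smith_key {S : Type*} [Fintype S] (π x : S → ℝ) :
    ∑ s, π s * smithV π x s
      = ∑ s, ∑ s', x s' * (max (π s - π s') 0)^2 := by
  have h1 : ∑ s, π s * smithV π x s
      = (∑ s, ∑ s', π s * (x s' * max (π s - π s') 0))
        - ∑ s, ∑ s', π s * (x s * max (π s' - π s) 0) := by
    simp only [smithV, mul_sub, Finset.mul_sum, Finset.sum_sub_distrib]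
  have h2 : ∑ s, ∑ s', π s * (x s * max (π s' - π s) 0)
      = ∑ s, ∑ s', π s' * (x s' * max (π s - π s') 0) := Finset.sum_comm ..
  rw [h1, h2, ← Finset.sum_sub_distrib]
  refine Finset.sum_congr rfl fun s _ => ?_
  rw [← Finset.sum_sub_distrib]
  refine Finset.sum_congr rfl fun s' _ => ?_
  have := max_mul_self (π s - π s')
  linear_combination x s' * this

/-- The Smith dynamic satisfies positive correlation. -/
theorem stmt3 {S : Type*} [Fintype S]
    (π x : S → ℝ) (hx : x ∈ stdSimplex ℝ S) :
    0 ≤ ∑ s, π s * smithV π x s ∧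
    (smithV π x ≠ 0 → 0 < ∑ s, π s * smithV π x s) := by
  have hx0 : ∀ s, 0 ≤ x s := hx.1
  have hterm : ∀ s s', 0 ≤ x s' * (max (π s - π s') 0)^2 :=
    fun s s' => mul_nonneg (hx0 s') (sq_nonneg _)
  have hkey := smith_key π x
  have hnn : 0 ≤ ∑ s, π s * smithV π x s := by
    rw [hkey]
    exact Finset.sum_nonneg fun s _ => Finset.sum_nonneg fun s' _ => hterm s s'
  refine ⟨hnn, fun hv => ?_⟩
  rcases lt_or_eq_of_le hnn with h | h
  · exact h
  exfalso
  apply hv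
  have hsum0 : ∑ s, ∑ s', x s' * (max (π s - π s') 0)^2 = 0 := by
    rw [← hkey, ← h]
  have hz : ∀ s s', x s' * max (π s - π s') 0 = 0 := by
    intro s s'
    have h1 := (Finset.sum_eq_zero_iff_of_nonneg
      (fun s _ => Finset.sum_nonneg fun s' _ => hterm s s')).mp hsum0 s (mem_univ s)
    have h2 := (Finset.sum_eq_zero_iff_of_nonneg
      (fun s' _ => hterm s s')).mp h1 s' (mem_univ s')
    rcases mul_eq_zero.mp h2 with h3 | h3
    · rw [h3, zero_mul]
    · rw [pow_eq_zero_iff (by norm_num) |>.mp h3, mul_zero]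
  funext s
  simp only [smithV, Pi.zero_apply]
  have ha : ∑ s', x s' * max (π s - π s') 0 = 0 :=
    Finset.sum_eq_zero fun s' _ => hz s s'
  have hb : x s * ∑ s', max (π s' - π s) 0 = 0 := by
    rw [Finset.mul_sum]
    exact Finset.sum_eq_zero fun s' _ => hz s' s
  rw [ha, hb, sub_zero]
end

section
/- The Smith dynamic satisfies best response stationarity: v(π,x) = 0 if and only if x ∈ Δ(S_BR(π)), i.e. x_s > 0 implies s ∈ argmax_{s'} π_{s'}, for all π ∈ ℝ^S and x ∈ Δ^S. -/
open Finset

/-- The Smith dynamic satisfies best response stationarity. -/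
theorem stmt4 {S : Type*} [Fintype S]
    (π x : S → ℝ) (hx : x ∈ stdSimplex ℝ S) :
    (∀ s, smithV π x s = 0) ↔ (∀ s, 0 < x s → ∀ s', π s' ≤ π s) := by
  obtain ⟨hnn, -⟩ := hx
  constructor
  · intro h s hs s'
    -- take m minimizing π over the support of x
    have hTne : (univ.filter (fun t => 0 < x t)).Nonempty :=
      ⟨s, by simp [hs]⟩
    obtain ⟨m, hm, hmin⟩ := Finset.exists_min_image _ π hTne
    have hxm : 0 < x m := (Finset.mem_filter.mp hm).2
    have hms : π m ≤ π s := hmin s (by simp [hs])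
    -- first sum in smithV π x m is zero
    have h1 : (∑ t, x t * max (π m - π t) 0) = 0 := by
      apply Finset.sum_eq_zero
      intro t _
      rcases lt_or_eq_of_le (hnn t) with ht | ht
      · have : π m ≤ π t := hmin t (by simp [ht])
        simp [max_eq_right (by linarith : π m - π t ≤ 0)]
      · simp [← ht]
    have hm0 := h m
    unfold smithV at hm0
    rw [h1] at hm0
    have hsum : (∑ t, max (π t - π m) 0) = 0 := by
      have := mul_eq_zero.mp (by linarith : x m * ∑ t, max (π t - π m) 0 = 0)
      rcases this with h' | h'
      · exact absurd h' (ne_of_gt hxm)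
      · exact h'
    have hterm : max (π s' - π m) 0 = 0 := by
      have := (Finset.sum_eq_zero_iff_of_nonneg
        (fun t _ => le_max_right _ 0)).mp hsum s' (mem_univ s')
      exact this
    have : π s' ≤ π m := by
      by_contra hc
      push_neg at hc
      rw [max_eq_left (by linarith)] at hterm
      linarith
    linarith
  · intro h s
    unfold smithV
    have h1 : (∑ t, x t * max (π s - π t) 0) = 0 := by
      apply Finset.sum_eq_zero
      intro t _
      rcases lt_or_eq_of_le (hnn t) with ht | ht
      · have : π s ≤ π t := h t ht s
        simp [max_eq_right (by linarith : π s - π t ≤ 0)]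
      · simp [← ht]
    have h2 : x s * (∑ t, max (π t - π s) 0) = 0 := by
      rcases lt_or_eq_of_le (hnn s) with hs | hs
      · have : (∑ t, max (π t - π s) 0) = 0 := by
          apply Finset.sum_eq_zero
          intro t _
          have : π t ≤ π s := h s hs t
          simp [max_eq_right (by linarith : π t - π s ≤ 0)]
        rw [this, mul_zero]
      · rw [← hs, zero_mul]
    rw [h1, h2, sub_zero]
end

section
/- For the BNN (Brown–von Neumann–Nash) protocol ρ_{ss'}(π,x) = [π_{s'} − x·π]_+, the mean dynamic v_s(π,x) = [π_s − x·π]_+ − x_s Σ_{s'} [π_{s'} − x·π]_+ satisfies positive correlation: π · v(π,x) ≥ 0 for all π ∈ ℝ^S and x ∈ Δ^S, with equality only if v(π,x) = 0. -/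
open Finset

/-- The mean dynamic of the BNN protocol. -/
noncomputable def bnnV {S : Type*} [Fintype S] (π x : S → ℝ) (s : S) : ℝ :=
  max (π s - ∑ t, x t * π t) 0 - x s * ∑ s', max (π s' - ∑ t, x t * π t) 0

/-- The BNN dynamic satisfies positive correlation, with equality only at rest. -/
theorem stmt5 {S : Type*} [Fintype S]
    (π x : S → ℝ) (hx : x ∈ stdSimplex ℝ S) :
    0 ≤ ∑ s, π s * bnnV π x s ∧
    (∑ s, π s * bnnV π x s = 0 → bnnV π x = 0) := by
  set B : ℝ := ∑ t, x t * π t with hB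
  set e : S → ℝ := fun s => max (π s - B) 0 with he
  have hxB : ∑ s, π s * x s = B := by
    rw [hB]; exact Finset.sum_congr rfl fun s _ => mul_comm _ _
  have hsum : ∑ s, π s * bnnV π x s = ∑ s, (e s) ^ 2 := by
    have h1 : ∑ s, π s * bnnV π x s
        = (∑ s, π s * e s) - (∑ s, π s * x s) * (∑ s', e s') := by
      rw [Finset.sum_mul, ← Finset.sum_sub_distrib]
      refine Finset.sum_congr rfl fun s _ => ?_
      simp only [bnnV, he, ← hB]
      ring
    rw [h1, hxB]
    have h2 : B * (∑ s', e s') = ∑ s, B * e s := by rw [Finset.mul_sum]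
    rw [h2, ← Finset.sum_sub_distrib]
    refine Finset.sum_congr rfl fun s _ => ?_
    have h3 : π s * e s - B * e s = (π s - B) * e s := by ring
    rw [h3]; simp only [he]
    rcases le_or_gt (π s - B) 0 with h | h
    · simp [max_eq_right h]
    · rw [max_eq_left h.le]; ring
  constructor
  · rw [hsum]; exact Finset.sum_nonneg fun s _ => sq_nonneg _
  · intro h0
    rw [hsum] at h0
    have hz : ∀ s ∈ Finset.univ, (e s) ^ 2 = 0 :=
      (Finset.sum_eq_zero_iff_of_nonneg fun s _ => sq_nonneg _).mp h0
    have hze : ∀ s, e s = 0 := fun s =>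
      pow_eq_zero_iff (n := 2) (by norm_num) |>.mp (hz s (Finset.mem_univ s))
    funext s
    have h1 : max (π s - B) 0 = 0 := by simpa [he] using hze s
    have h2 : ∑ s', max (π s' - B) 0 = 0 := by
      refine Finset.sum_eq_zero fun s' _ => by simpa [he] using hze s'
    simp only [bnnV, ← hB, h1, h2, Pi.zero_apply]
    ring
end

section
/- In an additively separable aggregate game built from a homogeneous potential game, the function f(X) = f⁰(x̄) + ∫_Θ θ · x(θ) ℙ_Θ(dθ), where x̄ = ∫_Θ x(θ)ℙ_Θ(dθ) ∈ Δ^S, is a potential: for conditional strategy distributions x, x' with aggregates x̄, x̄', f(X') − f(X) = ∫_Θ (F⁰(x̄)+θ)·(x'(θ)−x(θ)) ℙ_Θ(dθ) + o(‖X'−X‖), where ‖X'−X‖ = ∫_Θ |x'(θ)−x(θ)| ℙ_Θ(dθ). -/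
open Finset MeasureTheory

/-- Helper: each coordinate of a simplex point is between 0 and 1. -/
lemma stdSimplex_coord_le_one {S : Type*} [Fintype S] {y : S → ℝ}
    (hy : y ∈ stdSimplex ℝ S) (s : S) : |y s| ≤ 1 := by
  rw [abs_of_nonneg (hy.1 s)]
  calc y s ≤ ∑ t, y t := Finset.single_le_sum (fun t _ => hy.1 t) (Finset.mem_univ s)
  _ = 1 := hy.2

/-- In an additively separable aggregate game built from a homogeneous potential
game, `f(X) = f⁰(x̄) + ∫ θ·x(θ) dP` is a heterogeneous potential: the first-order
term of `f(X') − f(X)` is `∫ (F⁰(x̄)+θ)·(x'−x) dP`, with error `o(‖X'−X‖)`. -/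
theorem stmt10 {S : Type*} [Fintype S] [DecidableEq S]
    (P : Measure (S → ℝ)) [IsProbabilityMeasure P]
    (hmom : Integrable (fun θ : S → ℝ => ∑ s, |θ s|) P)
    (f0 : (S → ℝ) → ℝ) (F0 : (S → ℝ) → (S → ℝ))
    (hpot : ∀ z : S → ℝ,
      HasFDerivAt f0 (∑ s, F0 z s • (ContinuousLinearMap.proj s : (S → ℝ) →L[ℝ] ℝ)) z)
    (x : (S → ℝ) → (S → ℝ)) (hx : ∀ θ, x θ ∈ stdSimplex ℝ S)
    (hxm : ∀ s, Measurable fun θ => x θ s)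
    (ε : ℝ) (hε : 0 < ε) :
    ∃ δ > 0, ∀ x' : (S → ℝ) → (S → ℝ),
      (∀ θ, x' θ ∈ stdSimplex ℝ S) → (∀ s, Measurable fun θ => x' θ s) →
      (∫ θ, ∑ s, |x' θ s - x θ s| ∂P) ≤ δ →
      |(f0 (fun s => ∫ θ, x' θ s ∂P) + ∫ θ, ∑ s, θ s * x' θ s ∂P)
        - (f0 (fun s => ∫ θ, x θ s ∂P) + ∫ θ, ∑ s, θ s * x θ s ∂P)
        - ∫ θ, ∑ s, (F0 (fun s' => ∫ θ', x θ' s' ∂P) s + θ s) * (x' θ s - x θ s) ∂P|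
        ≤ ε * ∫ θ, ∑ s, |x' θ s - x θ s| ∂P := by
  classical
  -- basic integrability facts
  have hco : ∀ (y : (S → ℝ) → (S → ℝ)), (∀ θ, y θ ∈ stdSimplex ℝ S) →
      (∀ s, Measurable fun θ => y θ s) → ∀ s, Integrable (fun θ => y θ s) P := by
    intro y hy hym s
    exact (integrable_const (1:ℝ)).mono' ((hym s).aestronglyMeasurable)
      (Filter.Eventually.of_forall fun θ => by
        simpa using stdSimplex_coord_le_one (hy θ) s)
  have hθco : ∀ (y : (S → ℝ) → (S → ℝ)), (∀ θ, y θ ∈ stdSimplex ℝ S) →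
      (∀ s, Measurable fun θ => y θ s) → ∀ s,
      Integrable (fun θ => θ s * y θ s) P := by
    intro y hy hym s
    refine hmom.mono' (((measurable_pi_apply s).mul (hym s)).aestronglyMeasurable)
      (Filter.Eventually.of_forall fun θ => ?_)
    have h1 : |θ s * y θ s| = |θ s| * |y θ s| := abs_mul _ _
    have h2 : |θ s| * |y θ s| ≤ |θ s| * 1 :=
      mul_le_mul_of_nonneg_left (stdSimplex_coord_le_one (hy θ) s) (abs_nonneg _)
    have h3 : |θ s| ≤ ∑ t, |θ t| :=
      Finset.single_le_sum (fun t _ => abs_nonneg (θ t)) (Finset.mem_univ s)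
    simp only [Real.norm_eq_abs]
    calc |θ s * y θ s| = |θ s| * |y θ s| := h1
      _ ≤ |θ s| := by simpa using h2
      _ ≤ ∑ t, |θ t| := h3
  set xb : S → ℝ := fun s => ∫ θ, x θ s ∂P with hxbdef
  set D : (S → ℝ) →L[ℝ] ℝ := ∑ s, F0 xb s • (ContinuousLinearMap.proj s) with hD
  have hlo := ((hpot xb).isLittleO).def hε
  rw [Metric.eventually_nhds_iff] at hlo
  obtain ⟨δ', hδ', hball⟩ := hlo
  refine ⟨δ' / 2, by positivity, ?_⟩
  intro x' hx' hxm' hN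
  set xb' : S → ℝ := fun s => ∫ θ, x' θ s ∂P with hxbdef'
  set N : ℝ := ∫ θ, ∑ s, |x' θ s - x θ s| ∂P with hNdef
  have hN0 : 0 ≤ N := integral_nonneg fun θ => Finset.sum_nonneg fun s _ => abs_nonneg _
  -- coordinate integrabilities
  have hix := hco x hx hxm
  have hix' := hco x' hx' hxm'
  have hiθx := hθco x hx hxm
  have hiθx' := hθco x' hx' hxm'
  have hidiff : ∀ s, Integrable (fun θ => x' θ s - x θ s) P := fun s => (hix' s).sub (hix s)
  have hiabs : ∀ s, Integrable (fun θ => |x' θ s - x θ s|) P := fun s => (hidiff s).abs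
  have hisum : Integrable (fun θ => ∑ s, |x' θ s - x θ s|) P :=
    integrable_finset_sum _ fun s _ => hiabs s
  -- coordinates of xb' - xb are small
  have hcoord : ∀ s, |xb' s - xb s| ≤ N := by
    intro s
    have h1 : xb' s - xb s = ∫ θ, (x' θ s - x θ s) ∂P := (integral_sub (hix' s) (hix s)).symm
    rw [h1]
    calc |∫ θ, (x' θ s - x θ s) ∂P| ≤ ∫ θ, |x' θ s - x θ s| ∂P := by
          simpa using norm_integral_le_integral_norm (fun θ => x' θ s - x θ s) (μ := P)
      _ ≤ N := integral_mono (hiabs s) hisum fun θ =>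
          Finset.single_le_sum (f := fun t => |x' θ t - x θ t|)
            (fun t _ => abs_nonneg _) (Finset.mem_univ s)
  have hnorm : ‖xb' - xb‖ ≤ N := by
    rw [pi_norm_le_iff_of_nonneg hN0]
    intro s
    simpa [Real.norm_eq_abs] using hcoord s
  have hdist : dist xb' xb < δ' := by
    rw [dist_eq_norm]
    calc ‖xb' - xb‖ ≤ N := hnorm
      _ ≤ δ' / 2 := hN
      _ < δ' := by linarith
  have hkey : ‖f0 xb' - f0 xb - D (xb' - xb)‖ ≤ ε * ‖xb' - xb‖ := hball hdist
  -- compute D (xb' - xb)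
  have hDval : D (xb' - xb) = ∑ s, F0 xb s * (xb' s - xb s) := by
    rw [hD, ContinuousLinearMap.sum_apply]
    refine Finset.sum_congr rfl fun s _ => ?_
    simp [ContinuousLinearMap.smul_apply, ContinuousLinearMap.proj_apply, smul_eq_mul]
  -- key integral identity
  have hJ : (∫ θ, ∑ s, (F0 xb s + θ s) * (x' θ s - x θ s) ∂P)
      = (∑ s, F0 xb s * (xb' s - xb s))
        + ((∫ θ, ∑ s, θ s * x' θ s ∂P) - ∫ θ, ∑ s, θ s * x θ s ∂P) := by
    have hpt : ∀ θ : S → ℝ, (∑ s, (F0 xb s + θ s) * (x' θ s - x θ s))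
        = (∑ s, F0 xb s * (x' θ s - x θ s))
          + ((∑ s, θ s * x' θ s) - ∑ s, θ s * x θ s) := by
      intro θ
      rw [← Finset.sum_sub_distrib, ← Finset.sum_add_distrib]
      exact Finset.sum_congr rfl fun s _ => by ring
    have hi1 : ∀ s ∈ Finset.univ, Integrable (fun θ => F0 xb s * (x' θ s - x θ s)) P :=
      fun s _ => (hidiff s).const_mul _
    have hi1' : Integrable (fun θ => ∑ s, F0 xb s * (x' θ s - x θ s)) P :=
      integrable_finset_sum _ hi1
    have hi2 : Integrable (fun θ => ∑ s, θ s * x' θ s) P :=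
      integrable_finset_sum _ fun s _ => hiθx' s
    have hi3 : Integrable (fun θ => ∑ s, θ s * x θ s) P :=
      integrable_finset_sum _ fun s _ => hiθx s
    calc (∫ θ, ∑ s, (F0 xb s + θ s) * (x' θ s - x θ s) ∂P)
        = ∫ θ, ((∑ s, F0 xb s * (x' θ s - x θ s))
            + ((∑ s, θ s * x' θ s) - ∑ s, θ s * x θ s)) ∂P := by
          exact integral_congr_ae (Filter.Eventually.of_forall hpt)
      _ = (∫ θ, ∑ s, F0 xb s * (x' θ s - x θ s) ∂P)
            + ((∫ θ, ∑ s, θ s * x' θ s ∂P) - ∫ θ, ∑ s, θ s * x θ s ∂P) := by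
          have hi23 : Integrable
              (fun θ => (∑ s, θ s * x' θ s) - ∑ s, θ s * x θ s) P := hi2.sub hi3
          rw [integral_add hi1' hi23, integral_sub hi2 hi3]
      _ = (∑ s, F0 xb s * (xb' s - xb s))
            + ((∫ θ, ∑ s, θ s * x' θ s ∂P) - ∫ θ, ∑ s, θ s * x θ s ∂P) := by
          congr 1
          rw [integral_finset_sum _ hi1]
          refine Finset.sum_congr rfl fun s _ => ?_
          rw [integral_const_mul, integral_sub (hix' s) (hix s)]
  -- assemble
  have hgoal : (f0 xb' + ∫ θ, ∑ s, θ s * x' θ s ∂P)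
      - (f0 xb + ∫ θ, ∑ s, θ s * x θ s ∂P)
      - (∫ θ, ∑ s, (F0 xb s + θ s) * (x' θ s - x θ s) ∂P)
      = f0 xb' - f0 xb - D (xb' - xb) := by
    rw [hJ, hDval]; ring
  calc |(f0 xb' + ∫ θ, ∑ s, θ s * x' θ s ∂P)
      - (f0 xb + ∫ θ, ∑ s, θ s * x θ s ∂P)
      - ∫ θ, ∑ s, (F0 xb s + θ s) * (x' θ s - x θ s) ∂P|
      = ‖f0 xb' - f0 xb - D (xb' - xb)‖ := by rw [hgoal]; rfl
    _ ≤ ε * ‖xb' - xb‖ := hkey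
    _ ≤ ε * N := mul_le_mul_of_nonneg_left hnorm hε.le
end

section
/- Suppose v : ℝ^S × Δ^S → ℝ^S satisfies positive correlation, F is a heterogeneous potential game with potential f, and t ↦ X_t is a solution trajectory of the heterogeneous dynamic with density x_t. Then t ↦ f(X_t) is nondecreasing, since d/dt f(X_t) = ∫_Θ F[X_t](θ) · v(F[X_t](θ), x_t(θ)) ℙ_Θ(dθ) ≥ 0, and it is strictly increasing at any time t at which v(F[X_t](θ), x_t(θ)) ≠ 0 on a set of types of positive ℙ_Θ-measure. -/
open Finset MeasureTheory

theorem integral_pos_of_measure_pos_of_forall_ne_zero {α : Type*} [MeasurableSpace α]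
    {μ : Measure α} {g : α → ℝ} (hg : 0 ≤ g) (hgi : Integrable g μ) {A : Set α}
    (hA : 0 < μ A) (hAg : ∀ a ∈ A, g a ≠ 0) : 0 < ∫ a, g a ∂μ :=
  (integral_pos_iff_support_of_nonneg hg hgi).2 (hA.trans_le (measure_mono hAg))

theorem stmt15_general {S : Type*} [Fintype S] {Θ : Type*} [MeasurableSpace Θ]
    (P : Measure Θ)
    (v : (S → ℝ) → (S → ℝ) → (S → ℝ))
    (hPC : ∀ (π x0 : S → ℝ), x0 ∈ stdSimplex ℝ S →
      0 ≤ ∑ s, π s * v π x0 s ∧ (v π x0 ≠ 0 → 0 < ∑ s, π s * v π x0 s))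
    (x : ℝ → Θ → S → ℝ) (hx : ∀ t θ, x t θ ∈ stdSimplex ℝ S)
    (Fpay : ℝ → Θ → S → ℝ)
    (hint : ∀ t, Integrable (fun θ => ∑ s, Fpay t θ s * v (Fpay t θ) (x t θ) s) P)
    (f : ℝ → ℝ)
    (hderiv : ∀ t, HasDerivAt f
      (∫ θ, ∑ s, Fpay t θ s * v (Fpay t θ) (x t θ) s ∂P) t) :
    MonotoneOn f (Set.Ici 0) ∧
    ∀ t : ℝ, 0 ≤ t → 0 < P {θ | v (Fpay t θ) (x t θ) ≠ 0} →
      0 < ∫ θ, ∑ s, Fpay t θ s * v (Fpay t θ) (x t θ) s ∂P := by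
  have hcorr_nonneg : ∀ t θ, 0 ≤ ∑ s, Fpay t θ s * v (Fpay t θ) (x t θ) s :=
    fun t θ => (hPC _ _ (hx t θ)).1
  have hcorr_ne_zero : ∀ t θ, v (Fpay t θ) (x t θ) ≠ 0 →
      ∑ s, Fpay t θ s * v (Fpay t θ) (x t θ) s ≠ 0 :=
    fun t θ hθ => ((hPC _ _ (hx t θ)).2 hθ).ne'
  refine ⟨?_, fun t _ hmoving => ?_⟩
  · exact (monotone_of_hasDerivAt_nonneg hderiv
      fun t => integral_nonneg (hcorr_nonneg t)).monotoneOn _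
  · exact integral_pos_of_measure_pos_of_forall_ne_zero (hcorr_nonneg t) (hint t) hmoving
      (hcorr_ne_zero t)

/-- Under positive correlation, the potential value is nondecreasing along a
solution trajectory of the heterogeneous dynamic, and its derivative is strictly
positive whenever a positive mass of types is not at rest. -/
theorem stmt15 {S : Type*} [Fintype S] {Θ : Type*} [MeasurableSpace Θ]
    (P : Measure Θ) [IsProbabilityMeasure P]
    (v : (S → ℝ) → (S → ℝ) → (S → ℝ))
    (hPC : ∀ (π x0 : S → ℝ), x0 ∈ stdSimplex ℝ S →
      0 ≤ ∑ s, π s * v π x0 s ∧ (v π x0 ≠ 0 → 0 < ∑ s, π s * v π x0 s))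
    (x : ℝ → Θ → S → ℝ) (hx : ∀ t θ, x t θ ∈ stdSimplex ℝ S)
    (Fpay : ℝ → Θ → S → ℝ)
    (hint : ∀ t, Integrable (fun θ => ∑ s, Fpay t θ s * v (Fpay t θ) (x t θ) s) P)
    (f : ℝ → ℝ)
    (hderiv : ∀ t, HasDerivAt f
      (∫ θ, ∑ s, Fpay t θ s * v (Fpay t θ) (x t θ) s ∂P) t) :
    MonotoneOn f (Set.Ici 0) ∧
    ∀ t : ℝ, 0 ≤ t → 0 < P {θ | v (Fpay t θ) (x t θ) ≠ 0} →
      0 < ∫ θ, ∑ s, Fpay t θ s * v (Fpay t θ) (x t θ) s ∂P :=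
  stmt15_general P v hPC x hx Fpay hint f hderiv
end
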